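/- Let γ′_1,…,γ′_n be (ε)-contours at a configuration τ in Λ(l) with γ′_j ∩ ∂Q(Λ(l)) = ∅ for all j. Then Δ_{γ′_1,…,γ′_n} H^ω_{Λ(l)}(τ) = 2∑_{j=1}^n |γ′_j|. -/

import Mathlib

open Finset

/-! ### Basic lattice notions for the 2-D Ising model on the square Λ(l) -/

abbrev Site := ℤ × ℤ

/-- `l¹`-distance on `ℤ²`. -/
def d1 (x y : Site) : ℤ := |x.1 - y.1| + |x.2 - y.2|

/-- `l∞`-distance on `ℤ²`. -/
def dinf (x y : Site) : ℤ := max |x.1 - y.1| |x.2 - y.2|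

/-- There is a path from `x` to `y` inside `S` with steps of `d`-distance 1. -/
def ChainIn (d : Site → Site → ℤ) (S : Set Site) (x y : Site) : Prop :=
  ∃ L : List Site, L.Chain' (fun a b => d a b = 1) ∧ L.head? = some x ∧
    L.getLast? = some y ∧ ∀ a ∈ L, a ∈ S

/-- `S` is connected with respect to steps of `d`-distance 1. -/
def ConnIn (d : Site → Site → ℤ) (S : Set Site) : Prop :=
  ∀ x ∈ S, ∀ y ∈ S, ChainIn d S x y

def lamLo (l : ℕ) : ℤ := 1 - (((l + 1) / 2 : ℕ) : ℤ)
def lamHi (l : ℕ) : ℤ := ((l / 2 : ℕ) : ℤ)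

/-- The lamBox the box. -/
noncomputable def lamBox (l : ℕ) : Finset Site := Finset.Icc (lamLo l, lamLo l) (lamHi l, lamHi l)

/-- The exterior boundary `∂_ex Λ(l)`. -/
def extBdry (l : ℕ) : Set Site := {y | y ∉ lamBox l ∧ ∃ x ∈ lamBox l, d1 x y = 1}

/-- An interval of `∂_ex Λ(l)` : an `l∞`-connected subset of it. -/
def IsBdryInterval (l : ℕ) (I : Finset Site) : Prop :=
  (↑I : Set Site) ⊆ extBdry l ∧ ConnIn dinf ↑I

/-- The four nearest neighbours of a site. -/
def nbrs (x : Site) : Finset Site :=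
  {(x.1 + 1, x.2), (x.1 - 1, x.2), (x.1, x.2 + 1), (x.1, x.2 - 1)}

/-- A dual bond, recorded by its two endpoints `v`, a dual vertex `v` standing for the
point `v + (1/2, 1/2)` of the dual lattice. -/
abbrev DBond := Sym2 Site

/-- The dual bond of the nearest-neighbour bond `{x, y}`. -/
def dualBond (x y : Site) : DBond :=
  if x.2 = y.2 then s((min x.1 y.1, x.2 - 1), (min x.1 y.1, x.2))
  else s((x.1 - 1, min x.2 y.2), (x.1, min x.2 y.2))

/-- `∂Q(Θ)` : the set of dual bonds separating `Θ` from its complement. -/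
def contourOf (Θ : Finset Site) : Finset DBond :=
  Θ.biUnion fun x => ((nbrs x).filter (· ∉ Θ)).image fun y => dualBond x y

/-- `Θ` and its complement are `l¹`-connected, so that `∂Q(Θ)` is a contour. -/
def IsContourRegion (Θ : Finset Site) : Prop :=
  ConnIn d1 ↑Θ ∧ ConnIn d1 ((↑Θ : Set Site)ᶜ)

/-- `∂Q(Λ(l))`, as a set of dual bonds. -/
noncomputable def boxBdry (l : ℕ) : Finset DBond := contourOf (lamBox l)

/-- The dual vertex `v` lies on the side `F_l^j` of `Q(Λ(l))` (`j ∈ {1,-1,2,-2}` for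
right, left, top, bottom). -/
def onSide (l : ℕ) (j : ℤ) (v : Site) : Prop :=
  (j = 1 ∧ v.1 = lamHi l ∧ lamLo l - 1 ≤ v.2 ∧ v.2 ≤ lamHi l) ∨
  (j = -1 ∧ v.1 = lamLo l - 1 ∧ lamLo l - 1 ≤ v.2 ∧ v.2 ≤ lamHi l) ∨
  (j = 2 ∧ v.2 = lamHi l ∧ lamLo l - 1 ≤ v.1 ∧ v.1 ≤ lamHi l) ∨
  (j = -2 ∧ v.2 = lamLo l - 1 ∧ lamLo l - 1 ≤ v.1 ∧ v.1 ≤ lamHi l)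

/-- The set of dual bonds `γ` meets the side `F_l^j`. -/
def touches (l : ℕ) (j : ℤ) (γ : Finset DBond) : Prop :=
  ∃ e ∈ γ, ∃ v : Site, v ∈ e ∧ onSide l j v

def HorizCrossing (l : ℕ) (γ : Finset DBond) : Prop := touches l 1 γ ∧ touches l (-1) γ
def VertCrossing (l : ℕ) (γ : Finset DBond) : Prop := touches l 2 γ ∧ touches l (-2) γ

/-- `γ` is neither horizontally nor vertically crossing. -/
def NonCrossing (l : ℕ) (γ : Finset DBond) : Prop :=
  ¬ (HorizCrossing l γ ∨ VertCrossing l γ)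

/-- Two dual bonds are adjacent if they share a dual vertex. -/
def DAdj (a b : DBond) : Prop := ∃ v : Site, v ∈ a ∧ v ∈ b

/-- A set of dual bonds is connected (via shared dual vertices). -/
def DConn (S : Finset DBond) : Prop :=
  ∀ e ∈ S, ∀ f ∈ S, ∃ L : List DBond, L.Chain' DAdj ∧ L.head? = some e ∧
    L.getLast? = some f ∧ ∀ a ∈ L, a ∈ S

/-- Dual bonds separating `Θt` from `Λ(l) \ Θt` inside the lamBox. -/
noncomputable def interiorBdry (l : ℕ) (Θt : Finset Site) : Finset DBond :=
  Θt.biUnion fun x => ((nbrs x).filter fun y => y ∈ lamBox l ∧ y ∉ Θt).image fun y => dualBond x y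

/-- The sites of `Λ(l)` along the side `F_l^j`. -/
def sideSites (l : ℕ) (j : ℤ) (x : Site) : Prop :=
  x ∈ lamBox l ∧ ((j = 1 ∧ x.1 = lamHi l) ∨ (j = -1 ∧ x.1 = lamLo l) ∨
    (j = 2 ∧ x.2 = lamHi l) ∨ (j = -2 ∧ x.2 = lamLo l))

/-- The data of the distinguished connected component `γ̲ = γu` of `γ \ ∂Q(Λ(l))` and of the
region `Θ̃ = Θt` into which a non-crossing contour `γ = ∂Q(Θ)` divides the lamBox: `γu` is a
connected component of `γ \ ∂Q(Λ(l))` dividing `Λ(l)` into the `l¹`-connected pieces `Θt` and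
`Λ(l) \ Θt`, with `Θ ⊆ Θt` and `F_l^i ∪ F_l^j ⊆ ∂Q(Λ(l) \ Θt)` for untouched sides `i, j`. -/
def UnderlineData (l : ℕ) (Θ : Finset Site) (γu : Finset DBond) (Θt : Finset Site) : Prop :=
  γu ⊆ contourOf Θ \ boxBdry l ∧ DConn γu ∧
  (∀ e ∈ contourOf Θ \ boxBdry l, e ∉ γu → ∀ f ∈ γu, ¬ DAdj e f) ∧
  Θ ⊆ Θt ∧ Θt ⊆ lamBox l ∧ ConnIn d1 ↑Θt ∧ ConnIn d1 ↑(lamBox l \ Θt) ∧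
  interiorBdry l Θt = γu ∧
  ∃ i j : ℤ, (i = 1 ∨ i = -1) ∧ (j = 2 ∨ j = -2) ∧
    ¬ touches l i (contourOf Θ) ∧ ¬ touches l j (contourOf Θ) ∧
    (∀ x, sideSites l i x → x ∉ Θt) ∧ (∀ x, sideSites l j x → x ∉ Θt)

/-- `γ̄ = ∂Q(Λ(l)) ∩ ∂Q(Θ̃)`. -/
noncomputable def gammaBar (l : ℕ) (Θt : Finset Site) : Finset DBond := boxBdry l ∩ contourOf Θt

/-- `V_ex(γ)` : sites of the exterior boundary attached to dual bonds of `γ`. -/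
noncomputable def Vex (l : ℕ) (γ : Finset DBond) : Finset Site :=
  (lamBox l).biUnion fun x => (nbrs x).filter fun y => y ∉ lamBox l ∧ dualBond x y ∈ γ

/-- `T_Θ` : flip the spins in `Θ`. -/
def flipC (Θ : Finset Site) (σ : Site → ℤ) : Site → ℤ :=
  fun x => if x ∈ Θ then -σ x else σ x

/-- The Ising Hamiltonian `H^ω_{Λ(l)}(σ)` with boundary condition `ω`. -/
noncomputable def Ham (l : ℕ) (ω : Site → ℝ) (σ : Site → ℤ) : ℝ :=
  -(1/2) * ∑ x ∈ lamBox l, ∑ y ∈ (nbrs x).filter (· ∈ lamBox l), ((σ x * σ y : ℤ) : ℝ)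
    - ∑ x ∈ lamBox l, ∑ y ∈ (nbrs x).filter (· ∉ lamBox l), (σ x : ℝ) * ω y

/-- `Δ_{γ₁,…,γ_p} H^ω_{Λ(l)}(σ) = H(σ) - H(T_{γ₁}∘⋯∘T_{γ_p} σ)`, the contours being
recorded by their regions `Θ(γ_j)`. -/
noncomputable def dH (l : ℕ) (ω : Site → ℝ) (Θs : List (Finset Site)) (σ : Site → ℤ) : ℝ :=
  Ham l ω σ - Ham l ω (Θs.foldr flipC σ)

/-- `C` is an (ε)-cluster in `Λ(l)` at `σ` : a maximal `l¹`-connected component of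
`{x ∈ Λ(l) : σ_x = ε}`. -/
def IsCluster (l : ℕ) (σ : Site → ℤ) (ε : ℤ) (C : Finset Site) : Prop :=
  C.Nonempty ∧ (∀ x ∈ C, x ∈ lamBox l ∧ σ x = ε) ∧ ConnIn d1 ↑C ∧
  ∀ y ∈ lamBox l, σ y = ε → (∃ x ∈ C, d1 x y = 1) → y ∈ C

/-- The `l¹`-connected component of `x` within `S`. -/
def l1Comp (S : Set Site) (x : Site) : Set Site := {y | ChainIn d1 S x y}

/-- `C` together with the bounded components of its complement; `∂Q(fill C)` is the outer
boundary of `Q(C)`. -/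
def fill (C : Finset Site) : Set Site :=
  ↑C ∪ {x | (l1Comp ((↑C : Set Site)ᶜ) x).Finite}

/-- `Θ` is the region `Θ(γ)` of an (ε)-contour `γ` in `Λ(l)` at `σ`. -/
def IsEContour (l : ℕ) (σ : Site → ℤ) (ε : ℤ) (Θ : Finset Site) : Prop :=
  ∃ C : Finset Site, IsCluster l σ ε C ∧ (↑Θ : Set Site) = fill C

/-- A dual bond is horizontal. -/
def isHorizD (e : DBond) : Prop := ∃ v w : Site, e = s(v, w) ∧ v.2 = w.2

/-- A dual bond is vertical. -/
def isVertD (e : DBond) : Prop := ∃ v w : Site, e = s(v, w) ∧ v.1 = w.1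

open Classical in
/-- The number of horizontal dual bonds in `γ`. -/
noncomputable def horizCount (γ : Finset DBond) : ℕ := (γ.filter isHorizD).card

open Classical in
/-- The number of vertical dual bonds in `γ`. -/
noncomputable def vertCount (γ : Finset DBond) : ℕ := (γ.filter isVertD).card

/-! ### Glauber dynamics -/

/-- Configurations on a finite `Λ ⊂ ℤ²` (`true` = spin `+1`, `false` = spin `-1`). -/
abbrev Cfg (Λ : Finset Site) := ↥Λ → Bool

/-- The spin value of a Boolean. -/
def spinVal (b : Bool) : ℝ := if b then 1 else -1

/-- The Ising Hamiltonian on a general finite `Λ`. -/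
noncomputable def HamG (Λ : Finset Site) (ω : Site → ℝ) (σ : Cfg Λ) : ℝ :=
  -(1/2) * ∑ x : ↥Λ, ∑ y : ↥Λ, (if d1 ↑x ↑y = 1 then spinVal (σ x) * spinVal (σ y) else 0)
    - ∑ x : ↥Λ, ∑ y ∈ (nbrs ↑x).filter (· ∉ Λ), spinVal (σ x) * ω y

/-- The finite-volume Gibbs measure `μ^ω_Λ` at inverse temperature `β`. -/
noncomputable def gibbs (Λ : Finset Site) (ω : Site → ℝ) (β : ℝ) (σ : Cfg Λ) : ℝ :=
  Real.exp (-β * HamG Λ ω σ) / ∑ τ : Cfg Λ, Real.exp (-β * HamG Λ ω τ)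

/-- The mean of `f` under the weights `μ`. -/
noncomputable def meanW (Λ : Finset Site) (μ f : Cfg Λ → ℝ) : ℝ := ∑ σ : Cfg Λ, μ σ * f σ

/-- `σ^x` : flip the spin at `x`. -/
def flipAt (Λ : Finset Site) (σ : Cfg Λ) (x : ↥Λ) : Cfg Λ := Function.update σ x (!(σ x))

/-- The generator `A^ω_Λ` of the stochastic Ising model with flip rates `q`. -/
noncomputable def genA (Λ : Finset Site) (q : ↥Λ → Cfg Λ → ℝ) (f : Cfg Λ → ℝ) (σ : Cfg Λ) : ℝ :=
  ∑ x : ↥Λ, q x σ * (f (flipAt Λ σ x) - f σ)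

/-- The variance `μ(|f - μf|²)`. -/
noncomputable def varW (Λ : Finset Site) (μ f : Cfg Λ → ℝ) : ℝ :=
  meanW Λ μ (fun σ => |f σ - meanW Λ μ f| ^ 2)

/-- The spectral gap `gap(Λ, ω, β)` : the infimum of the Rayleigh quotients
`-μ(f A f) / μ(|f - μf|²)`. -/
noncomputable def specGap (Λ : Finset Site) (ω : Site → ℝ) (β : ℝ)
    (q : ↥Λ → Cfg Λ → ℝ) : ℝ :=
  sInf { r | ∃ f : Cfg Λ → ℝ, varW Λ (gibbs Λ ω β) f ≠ 0 ∧
    r = (- meanW Λ (gibbs Λ ω β) fun σ => f σ * genA Λ q f σ) / varW Λ (gibbs Λ ω β) f }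

/-- The `±1`-spin function of a configuration on `Λ(l)` (`0` outside the lamBox). -/
noncomputable def toSpin (l : ℕ) (σ : Cfg (lamBox l)) : Site → ℤ :=
  fun x => if h : x ∈ lamBox l then (if σ ⟨x, h⟩ then 1 else -1) else 0

/-- The magnetization at the origin, `μ^ω_{Λ(l)}(σ₀)`. -/
noncomputable def magZero (l : ℕ) (ω : Site → ℝ) (β : ℝ) : ℝ :=
  ∑ σ : Cfg (lamBox l), gibbs (lamBox l) ω β σ * ((toSpin l σ (0, 0) : ℤ) : ℝ)

/-- The favoured sign `ε_{l,ω}`. -/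
noncomputable def epsSign (l : ℕ) (ω : Site → ℝ) (β : ℝ) : ℤ :=
  if 0 ≤ magZero l ω β then 1 else -1

/-- The trap event `Γ_l` : some (ε)-contour `γ` at `σ` meets `∂Q(Λ(l))` and has
`|γ| ≥ 2δ₁ l`. -/
def GammaEvent (l : ℕ) (δ₁ : ℝ) (ε : ℤ) : Set (Cfg (lamBox l)) :=
  {σ | ∃ Θ : Finset Site, IsEContour l (toSpin l σ) ε Θ ∧
    (contourOf Θ ∩ boxBdry l).Nonempty ∧ 2 * δ₁ * l ≤ ((contourOf Θ).card : ℝ)}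

open Classical in
/-- The Gibbs probability of an event `S ⊂ Ω_{Λ(l)}`. -/
noncomputable def probOf (l : ℕ) (ω : Site → ℝ) (β : ℝ) (S : Set (Cfg (lamBox l))) : ℝ :=
  ∑ σ ∈ Finset.univ.filter (· ∈ S), gibbs (lamBox l) ω β σ

/-- Union of the contours of a list of regions. -/
def unionB (L : List (Finset Site)) : Finset DBond :=
  L.foldr (fun Θ s => contourOf Θ ∪ s) ∅

/-- Union of a list of regions. -/
def unionR (L : List (Finset Site)) : Finset Site :=
  L.foldr (· ∪ ·) ∅

/-!
Write `σ = T_{Θ₁} ∘ ⋯ ∘ T_{Θₙ} τ`. Across a bond `{x, y}` one has `σ_x σ_y = (-1)^k τ_x τ_y`,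
where `k` counts the regions `Θⱼ` whose contour contains the dual bond of `{x, y}`. The inner end
of such a bond lies in the `ε`-cluster of `Θⱼ` and its outer end, if inside `Λ(l)`, has spin `-ε`;
hence distinct contours share no dual bond, `k ≤ 1`, and every crossed bond turns from `-1` into
`+1`. Contours avoiding `∂Q(Λ(l))` flip no site next to the exterior, so the boundary term of the
Hamiltonian is unchanged, and each dual bond of a contour is met twice in the ordered sum over
neighbouring pairs, which gives `2 |γⱼ|` per contour.
-/

lemma mem_nbrs_iff {x y : Site} : y ∈ nbrs x ↔ d1 x y = 1 := by
  simp only [nbrs, d1, Finset.mem_insert, Finset.mem_singleton, Prod.ext_iff,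
    Int.abs_eq_natAbs]
  omega

lemma d1_comm (x y : Site) : d1 x y = d1 y x := by
  simp [d1, abs_sub_comm]

lemma d1_eq_one_cases {x y : Site} (h : d1 x y = 1) :
    (x.2 = y.2 ∧ (x.1 = y.1 + 1 ∨ y.1 = x.1 + 1)) ∨
    (x.1 = y.1 ∧ (x.2 = y.2 + 1 ∨ y.2 = x.2 + 1)) := by
  simp only [d1, Int.abs_eq_natAbs] at h
  omega

lemma dualBond_comm {x y : Site} (h : d1 x y = 1) : dualBond x y = dualBond y x := by
  rcases d1_eq_one_cases h with ⟨h1, -⟩ | ⟨h1, h2⟩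
  · simp [dualBond, h1, min_comm]
  · have hne : x.2 ≠ y.2 := by omega
    simp [dualBond, hne, hne.symm, h1, min_comm]

lemma eq_or_eq_swap_of_dualBond_eq {x y a b : Site} (hxy : d1 x y = 1) (hab : d1 a b = 1)
    (h : dualBond x y = dualBond a b) : (a = x ∧ b = y) ∨ (a = y ∧ b = x) := by
  have := d1_eq_one_cases hxy
  have := d1_eq_one_cases hab
  simp only [dualBond] at h
  split_ifs at h <;>
  · simp only [Sym2.eq_iff, Prod.ext_iff, min_def] at h ⊢
    split_ifs at h <;> omega

lemma mem_contourOf_iff {Θ : Finset Site} {x y : Site} (hxy : d1 x y = 1) :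
    dualBond x y ∈ contourOf Θ ↔ (x ∈ Θ ∧ y ∉ Θ) ∨ (y ∈ Θ ∧ x ∉ Θ) := by
  simp only [contourOf, Finset.mem_biUnion, Finset.mem_image, Finset.mem_filter, mem_nbrs_iff]
  constructor
  · rintro ⟨a, ha, b, ⟨hab, hb⟩, hd⟩
    rcases eq_or_eq_swap_of_dualBond_eq hxy hab hd.symm with ⟨rfl, rfl⟩ | ⟨rfl, rfl⟩
    exacts [Or.inl ⟨ha, hb⟩, Or.inr ⟨ha, hb⟩]
  · rintro (⟨hx, hy⟩ | ⟨hy, hx⟩)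
    · exact ⟨x, hx, y, ⟨hxy, hy⟩, rfl⟩
    · exact ⟨y, hy, x, ⟨d1_comm x y ▸ hxy, hx⟩, (dualBond_comm hxy).symm⟩

lemma mem_lamBox_iff {l : ℕ} {x : Site} :
    x ∈ lamBox l ↔ lamLo l ≤ x.1 ∧ x.1 ≤ lamHi l ∧ lamLo l ≤ x.2 ∧ x.2 ≤ lamHi l := by
  simp only [lamBox, Finset.mem_Icc, Prod.le_def]
  tauto

namespace ChainIn

variable {S : Set Site} {x y z : Site}

lemma refl (hx : x ∈ S) : ChainIn d1 S x x :=
  ⟨[x], List.isChain_singleton x, rfl, rfl, by simpa using hx⟩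

lemma cons (h : ChainIn d1 S y z) (hx : x ∈ S) (hxy : d1 x y = 1) : ChainIn d1 S x z := by
  obtain ⟨_ | ⟨a, L⟩, hch, hh, hl, hmem⟩ := h
  · simp at hh
  obtain rfl : a = y := by simpa using hh
  refine ⟨x :: a :: L, List.IsChain.cons_cons hxy hch, rfl, ?_, ?_⟩
  · rwa [List.getLast?_cons_cons]
  · simpa [hx] using hmem

lemma concat (h : ChainIn d1 S x y) (hz : z ∈ S) (hyz : d1 y z = 1) : ChainIn d1 S x z := by
  obtain ⟨_ | ⟨a, L⟩, hch, hh, hl, hmem⟩ := h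
  · simp at hh
  refine ⟨a :: L ++ [z], hch.append (List.isChain_singleton z) ?_, by simpa using hh,
    List.getLast?_concat, ?_⟩
  · intro a ha b hb
    rw [hl] at ha
    cases ha; cases hb; exact hyz
  · intro b hb
    rcases List.mem_append.1 hb with hb | hb
    exacts [hmem b hb, (List.mem_singleton.1 hb).symm ▸ hz]

end ChainIn

lemma l1Comp_infinite_of_ray {S : Set Site} {x e : Site} (he : d1 0 e = 1)
    (hS : ∀ t : ℕ, (x.1 + t * e.1, x.2 + t * e.2) ∈ S) : (l1Comp S x).Infinite := by
  simp only [d1, Prod.fst_zero, Prod.snd_zero, zero_sub, abs_neg] at he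
  refine Set.infinite_of_injective_forall_mem
    (f := fun t : ℕ => (x.1 + t * e.1, x.2 + t * e.2)) ?_ fun t => ?_
  · intro s t hst
    simp only [Prod.ext_iff, add_right_inj] at hst
    rcases abs_cases e.1 with h | h <;> rcases abs_cases e.2 with h' | h' <;> nlinarith
  · induction t with
    | zero =>
      simp only [Nat.cast_zero, zero_mul, add_zero]
      exact ChainIn.refl (by simpa using hS 0)
    | succ t ih =>
      refine ih.concat (hS (t + 1)) ?_
      rw [d1_comm]
      simp only [d1, Nat.cast_succ]
      convert he using 3 <;> ring

lemma exists_ray_notMem_lamBox {l : ℕ} {x : Site} (hx : x ∉ lamBox l) :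
    ∃ e : Site, d1 0 e = 1 ∧ ∀ t : ℕ, (x.1 + t * e.1, x.2 + t * e.2) ∉ lamBox l := by
  simp only [mem_lamBox_iff, not_and_or, not_le] at hx
  rcases hx with h | h | h | h
  · exact ⟨(-1, 0), by simp [d1], fun t ht => by simp [mem_lamBox_iff] at ht; omega⟩
  · exact ⟨(1, 0), by simp [d1], fun t ht => by simp [mem_lamBox_iff] at ht; omega⟩
  · exact ⟨(0, -1), by simp [d1], fun t ht => by simp [mem_lamBox_iff] at ht; omega⟩
  · exact ⟨(0, 1), by simp [d1], fun t ht => by simp [mem_lamBox_iff] at ht; omega⟩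

lemma fill_subset_lamBox {l : ℕ} {C : Finset Site} (hC : C ⊆ lamBox l) :
    fill C ⊆ ↑(lamBox l) := by
  rintro x (hx | hx)
  · exact hC hx
  by_contra hxΛ
  obtain ⟨e, he, hray⟩ := exists_ray_notMem_lamBox hxΛ
  exact l1Comp_infinite_of_ray (S := (↑C)ᶜ) he (fun t ht => hray t (hC ht)) hx

lemma mem_of_mem_fill_of_adj_notMem_fill {C : Finset Site} {x y : Site} (hx : x ∈ fill C)
    (hy : y ∉ fill C) (hxy : d1 x y = 1) : x ∈ C := by
  by_contra hxC
  have hfin : (l1Comp (↑C)ᶜ x).Finite := hx.resolve_left hxC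
  exact hy (Or.inr (hfin.subset fun z hz => ChainIn.cons hz hxC hxy))

namespace IsCluster

variable {l : ℕ} {σ : Site → ℤ} {ε : ℤ} {C C₁ C₂ : Finset Site} {x y : Site}

lemma subset_lamBox (h : IsCluster l σ ε C) : C ⊆ lamBox l :=
  fun x hx => (h.2.1 x hx).1

lemma spin_eq (h : IsCluster l σ ε C) (hx : x ∈ C) : σ x = ε :=
  (h.2.1 x hx).2

lemma spin_ne_of_adj (h : IsCluster l σ ε C) (hx : x ∈ C) (hy : y ∉ C) (hyΛ : y ∈ lamBox l)
    (hxy : d1 x y = 1) : σ y ≠ ε :=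
  fun hσy => hy (h.2.2.2 y hyΛ hσy ⟨x, hx, hxy⟩)

lemma forall_mem_of_isChain (h : IsCluster l σ ε C) {L : List Site}
    (hL : L.IsChain fun a b => d1 a b = 1) (hLσ : ∀ b ∈ L, b ∈ lamBox l ∧ σ b = ε) {a : Site}
    (ha : L.head? = some a) (haC : a ∈ C) : ∀ b ∈ L, b ∈ C := by
  induction L generalizing a with
  | nil => simp
  | cons a' L ih =>
    obtain rfl : a' = a := by simpa using ha
    intro b hb
    rcases List.mem_cons.1 hb with rfl | hb
    · exact haC
    cases L with
    | nil => simp at hb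
    | cons c L =>
      rw [List.isChain_cons_cons] at hL
      have hc : c ∈ C := h.2.2.2 c (hLσ c (by simp)).1 (hLσ c (by simp)).2 ⟨a', haC, hL.1⟩
      exact ih hL.2 (fun b hb => hLσ b (List.mem_cons_of_mem _ hb)) rfl hc b hb

lemma subset_of_mem (h₁ : IsCluster l σ ε C₁) (h₂ : IsCluster l σ ε C₂) (hx₁ : x ∈ C₁)
    (hx₂ : x ∈ C₂) : C₁ ⊆ C₂ := by
  intro y hy
  obtain ⟨L, hL, hh, hl, hmem⟩ := h₁.2.2.1 x hx₁ y hy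
  exact h₂.forall_mem_of_isChain hL (fun b hb => h₁.2.1 b (hmem b hb)) hh hx₂ y
    (List.mem_of_mem_getLast? hl)

lemma eq_of_mem (h₁ : IsCluster l σ ε C₁) (h₂ : IsCluster l σ ε C₂) (hx₁ : x ∈ C₁)
    (hx₂ : x ∈ C₂) : C₁ = C₂ :=
  (h₁.subset_of_mem h₂ hx₁ hx₂).antisymm (h₂.subset_of_mem h₁ hx₂ hx₁)

end IsCluster

namespace IsEContour

variable {l : ℕ} {σ : Site → ℤ} {ε : ℤ} {Θ Θ₁ Θ₂ : Finset Site} {x y : Site}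

lemma subset_lamBox (h : IsEContour l σ ε Θ) : Θ ⊆ lamBox l := by
  obtain ⟨C, hC, hΘ⟩ := h
  exact Finset.coe_subset.1 (hΘ ▸ fill_subset_lamBox hC.subset_lamBox)

lemma exists_isCluster_mem (h : IsEContour l σ ε Θ) (hx : x ∈ Θ) (hy : y ∉ Θ)
    (hxy : d1 x y = 1) : ∃ C, IsCluster l σ ε C ∧ (↑Θ : Set Site) = fill C ∧ x ∈ C := by
  obtain ⟨C, hC, hΘ⟩ := h
  rw [← Finset.mem_coe, hΘ] at hx hy
  exact ⟨C, hC, hΘ, mem_of_mem_fill_of_adj_notMem_fill hx hy hxy⟩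

lemma spin_of_crossing (h : IsEContour l σ ε Θ) (hx : x ∈ Θ) (hy : y ∉ Θ) (hxy : d1 x y = 1) :
    σ x = ε ∧ (y ∈ lamBox l → σ y ≠ ε) := by
  obtain ⟨C, hC, hΘ, hxC⟩ := h.exists_isCluster_mem hx hy hxy
  have hyC : y ∉ C := fun hyC => hy (by rw [← Finset.mem_coe, hΘ]; exact Or.inl hyC)
  exact ⟨hC.spin_eq hxC, fun hyΛ => hC.spin_ne_of_adj hxC hyC hyΛ hxy⟩

lemma nbrs_subset_lamBox (h : IsEContour l σ ε Θ) (hb : Disjoint (contourOf Θ) (boxBdry l))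
    (hx : x ∈ Θ) : nbrs x ⊆ lamBox l := by
  intro y hy
  rw [mem_nbrs_iff] at hy
  by_cases hyΘ : y ∈ Θ
  · exact h.subset_lamBox hyΘ
  by_contra hyΛ
  exact Finset.disjoint_left.1 hb ((mem_contourOf_iff hy).2 (.inl ⟨hx, hyΘ⟩))
    ((mem_contourOf_iff hy).2 (.inl ⟨h.subset_lamBox hx, hyΛ⟩))

lemma eq_of_mem_of_notMem (h₁ : IsEContour l σ ε Θ₁) (h₂ : IsEContour l σ ε Θ₂)
    (hxy : d1 x y = 1) (hx₁ : x ∈ Θ₁) (hy₁ : y ∉ Θ₁) (hx₂ : x ∈ Θ₂) (hy₂ : y ∉ Θ₂) :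
    Θ₁ = Θ₂ := by
  obtain ⟨C₁, hC₁, hΘ₁, hxC₁⟩ := h₁.exists_isCluster_mem hx₁ hy₁ hxy
  obtain ⟨C₂, hC₂, hΘ₂, hxC₂⟩ := h₂.exists_isCluster_mem hx₂ hy₂ hxy
  rw [← Finset.coe_inj, hΘ₁, hΘ₂, hC₁.eq_of_mem hC₂ hxC₁ hxC₂]

lemma notMem_of_crossing_reversed (h₁ : IsEContour l σ ε Θ₁) (h₂ : IsEContour l σ ε Θ₂)
    (hxy : d1 x y = 1) (hx₁ : x ∈ Θ₁) (hy₁ : y ∉ Θ₁) (hx₂ : x ∉ Θ₂) : y ∉ Θ₂ := by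
  intro hy₂
  have hyx : d1 y x = 1 := d1_comm x y ▸ hxy
  obtain ⟨C₂, hC₂, -, hyC₂⟩ := h₂.exists_isCluster_mem hy₂ hx₂ hyx
  exact (h₁.spin_of_crossing hx₁ hy₁ hxy).2 (hC₂.subset_lamBox hyC₂) (hC₂.spin_eq hyC₂)

lemma eq_of_dualBond_mem (h₁ : IsEContour l σ ε Θ₁) (h₂ : IsEContour l σ ε Θ₂)
    (hxy : d1 x y = 1) (he₁ : dualBond x y ∈ contourOf Θ₁) (he₂ : dualBond x y ∈ contourOf Θ₂) :
    Θ₁ = Θ₂ := by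
  have hyx : d1 y x = 1 := d1_comm x y ▸ hxy
  rcases (mem_contourOf_iff hxy).1 he₁ with ⟨hx₁, hy₁⟩ | ⟨hy₁, hx₁⟩ <;>
    rcases (mem_contourOf_iff hxy).1 he₂ with ⟨hx₂, hy₂⟩ | ⟨hy₂, hx₂⟩
  · exact h₁.eq_of_mem_of_notMem h₂ hxy hx₁ hy₁ hx₂ hy₂
  · exact absurd hy₂ (h₁.notMem_of_crossing_reversed h₂ hxy hx₁ hy₁ hx₂)
  · exact absurd hx₂ (h₁.notMem_of_crossing_reversed h₂ hyx hy₁ hx₁ hy₂)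
  · exact h₁.eq_of_mem_of_notMem h₂ hyx hy₁ hx₁ hy₂ hx₂

lemma spin_mul_eq_neg_one (h : IsEContour l σ ε Θ) (hσ : ∀ x ∈ lamBox l, σ x = 1 ∨ σ x = -1)
    (hε : ε = 1 ∨ ε = -1) (hxy : d1 x y = 1) (hx : x ∈ lamBox l) (hy : y ∈ lamBox l)
    (he : dualBond x y ∈ contourOf Θ) : σ x * σ y = -1 := by
  have hyx : d1 y x = 1 := d1_comm x y ▸ hxy
  rcases (mem_contourOf_iff hxy).1 he with ⟨hxΘ, hyΘ⟩ | ⟨hyΘ, hxΘ⟩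
  · have := h.spin_of_crossing hxΘ hyΘ hxy
    rcases hσ y hy with h' | h' <;> rcases hε with rfl | rfl <;> simp_all
  · have := h.spin_of_crossing hyΘ hxΘ hyx
    rcases hσ x hx with h' | h' <;> rcases hε with rfl | rfl <;> simp_all

end IsEContour

lemma foldr_flipC_apply_of_forall_notMem {L : List (Finset Site)} (σ : Site → ℤ) {x : Site}
    (hx : ∀ Θ ∈ L, x ∉ Θ) : L.foldr flipC σ x = σ x := by
  induction L with
  | nil => rfl
  | cons Θ L ih =>
    simp only [List.mem_cons, forall_eq_or_imp] at hx
    simp [flipC, hx.1, ih hx.2]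

lemma foldr_flipC_mul_foldr_flipC (L : List (Finset Site)) (σ : Site → ℤ) {x y : Site}
    (hxy : d1 x y = 1) :
    L.foldr flipC σ x * L.foldr flipC σ y =
      (-1) ^ L.countP (fun Θ => dualBond x y ∈ contourOf Θ) * (σ x * σ y) := by
  induction L with
  | nil => simp
  | cons Θ L ih =>
    have hcross := mem_contourOf_iff (Θ := Θ) hxy
    simp only [List.foldr_cons, List.countP_cons, flipC]
    by_cases hx : x ∈ Θ <;> by_cases hy : y ∈ Θ <;> simp [hx, hy, hcross, pow_succ, ← ih]

lemma countP_ofFn {α : Type*} {n : ℕ} (f : Fin n → α) (p : α → Bool) :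
    (List.ofFn f).countP p = #{j | p (f j)} := by
  induction n with
  | zero => simp
  | succ n ih =>
    rw [List.ofFn_succ, List.countP_cons, ih, Finset.card_filter, Finset.card_filter,
      Fin.sum_univ_succ, add_comm]

lemma dH_eq_half_sum_bond_change {l : ℕ} (ω : Site → ℝ) {L : List (Finset Site)}
    (τ : Site → ℤ) (hL : ∀ Θ ∈ L, ∀ x ∈ Θ, nbrs x ⊆ lamBox l) :
    dH l ω L τ = 1 / 2 * ((∑ x ∈ lamBox l, ∑ y ∈ (nbrs x).filter (· ∈ lamBox l),
      (L.foldr flipC τ x * L.foldr flipC τ y - τ x * τ y) : ℤ) : ℝ) := by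
  have hext : ∀ x ∈ lamBox l, ∀ y ∈ (nbrs x).filter (· ∉ lamBox l),
      (L.foldr flipC τ x : ℝ) * ω y = τ x * ω y := by
    intro x _ y hy
    rw [Finset.mem_filter] at hy
    rw [foldr_flipC_apply_of_forall_notMem τ fun Θ hΘ hxΘ => hy.2 (hL Θ hΘ x hxΘ hy.1)]
  simp only [dH, Ham, Finset.sum_congr rfl fun x hx => Finset.sum_congr rfl (hext x hx)]
  push_cast
  simp only [Finset.sum_sub_distrib]
  ring

lemma card_filter_dualBond_eq {Λ Θ : Finset Site} (hΘ : Θ ⊆ Λ) (hnb : ∀ x ∈ Θ, nbrs x ⊆ Λ)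
    {e : DBond} (he : e ∈ contourOf Θ) :
    #{p ∈ Λ.sigma fun x => (nbrs x).filter fun y => y ∈ Λ ∧ dualBond x y ∈ contourOf Θ |
      dualBond p.1 p.2 = e} = 2 := by
  obtain ⟨a, ha, b, hb, rfl⟩ : ∃ a ∈ Θ, ∃ b, (b ∈ nbrs a ∧ b ∉ Θ) ∧ dualBond a b = e := by
    simpa [contourOf] using he
  have hab : d1 a b = 1 := mem_nbrs_iff.1 hb.1
  have hba : d1 b a = 1 := d1_comm a b ▸ hab
  have hne : a ≠ b := by rintro rfl; simp [d1] at hab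
  rw [Finset.card_eq_two]
  refine ⟨⟨a, b⟩, ⟨b, a⟩, by simp [hne], ?_⟩
  ext ⟨x, y⟩
  simp only [Finset.mem_filter, Finset.mem_sigma, Finset.mem_insert, Finset.mem_singleton,
    Sigma.mk.injEq, heq_eq_eq, mem_nbrs_iff]
  constructor
  · rintro ⟨⟨-, hxy, -, -⟩, hd⟩
    rcases eq_or_eq_swap_of_dualBond_eq hab hxy hd.symm with ⟨rfl, rfl⟩ | ⟨rfl, rfl⟩ <;> simp
  · rintro (⟨hx, hy⟩ | ⟨hx, hy⟩) <;> subst x y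
    · exact ⟨⟨hΘ ha, hab, hnb a ha hb.1, he⟩, rfl⟩
    · rw [← dualBond_comm hab]
      exact ⟨⟨hnb a ha hb.1, hba, hΘ ha, he⟩, rfl⟩

lemma sum_nbrs_dualBond_mem_contourOf {Λ Θ : Finset Site} (hΘ : Θ ⊆ Λ)
    (hnb : ∀ x ∈ Θ, nbrs x ⊆ Λ) :
    ∑ x ∈ Λ, ∑ y ∈ (nbrs x).filter (· ∈ Λ), (if dualBond x y ∈ contourOf Θ then 1 else 0) =
      2 * #(contourOf Θ) := by
  simp only [Finset.sum_boole, Finset.filter_filter, Nat.cast_id]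
  rw [← Finset.card_sigma, Finset.card_eq_sum_card_fiberwise (t := contourOf Θ)
    (f := fun p => dualBond p.1 p.2)
    fun p hp => (Finset.mem_filter.1 (Finset.mem_sigma.1 hp).2).2.2,
    Finset.sum_congr rfl fun e he => card_filter_dualBond_eq hΘ hnb he, Finset.sum_const,
    smul_eq_mul, mul_comm]

lemma foldr_flipC_mul_sub_of_isEContour {l : ℕ} {τ : Site → ℤ}
    (hτ : ∀ x ∈ lamBox l, τ x = 1 ∨ τ x = -1) {ε : ℤ} (hε : ε = 1 ∨ ε = -1) {n : ℕ}
    {Θs : Fin n → Finset Site} (hcs : ∀ j, IsEContour l τ ε (Θs j))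
    (hinj : Function.Injective Θs) {x y : Site} (hxy : d1 x y = 1) (hx : x ∈ lamBox l)
    (hy : y ∈ lamBox l) :
    (List.ofFn Θs).foldr flipC τ x * (List.ofFn Θs).foldr flipC τ y - τ x * τ y =
      2 * #{j | dualBond x y ∈ contourOf (Θs j)} := by
  rw [foldr_flipC_mul_foldr_flipC _ _ hxy, countP_ofFn]
  simp only [decide_eq_true_eq]
  have hle : #{j | dualBond x y ∈ contourOf (Θs j)} ≤ 1 :=
    Finset.card_le_one.2 fun i hi j hj => hinj <|
      (hcs i).eq_of_dualBond_mem (hcs j) hxy (Finset.mem_filter.1 hi).2 (Finset.mem_filter.1 hj).2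
  rcases Nat.le_one_iff_eq_zero_or_eq_one.1 hle with h0 | h1
  · simp [h0]
  · obtain ⟨j, hj⟩ := Finset.card_eq_one.1 h1
    have he : dualBond x y ∈ contourOf (Θs j) := by
      simpa using (Finset.ext_iff.1 hj j).2 (Finset.mem_singleton_self j)
    rw [h1, (hcs j).spin_mul_eq_neg_one hτ hε hxy hx hy he]
    norm_num

/-- For (ε)-contours `γ′₁,…,γ′_n` at `τ` in `Λ(l)` none of which meets
`∂Q(Λ(l))`: `Δ_{γ′₁,…,γ′_n}H^ω(τ) = 2 ∑_j |γ′_j|`. -/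
theorem stmt16 (l : ℕ) (τ : Site → ℤ) (hτ : ∀ x ∈ lamBox l, τ x = 1 ∨ τ x = -1)
    (ε : ℤ) (hε : ε = 1 ∨ ε = -1) (ω : Site → ℝ)
    (n : ℕ) (Θs : Fin n → Finset Site)
    (hcs : ∀ j, IsEContour l τ ε (Θs j)) (hinj : Function.Injective Θs)
    (hb : ∀ j, contourOf (Θs j) ∩ boxBdry l = ∅) :
    dH l ω (List.ofFn Θs) τ = 2 * ∑ j, ((contourOf (Θs j)).card : ℝ) := by
  have hnb : ∀ j, ∀ x ∈ Θs j, nbrs x ⊆ lamBox l := fun j _ =>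
    (hcs j).nbrs_subset_lamBox (Finset.disjoint_iff_inter_eq_empty.2 (hb j))
  have hcount : ∑ x ∈ lamBox l, ∑ y ∈ (nbrs x).filter (· ∈ lamBox l),
      #{j | dualBond x y ∈ contourOf (Θs j)} = ∑ j, 2 * #(contourOf (Θs j)) := by
    simp only [Finset.card_filter]
    rw [Finset.sum_congr rfl fun x _ => Finset.sum_comm, Finset.sum_comm]
    exact Finset.sum_congr rfl fun j _ =>
      sum_nbrs_dualBond_mem_contourOf (hcs j).subset_lamBox (hnb j)
  have hbonds : ∑ x ∈ lamBox l, ∑ y ∈ (nbrs x).filter (· ∈ lamBox l),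
      ((List.ofFn Θs).foldr flipC τ x * (List.ofFn Θs).foldr flipC τ y - τ x * τ y) =
        2 * ((∑ x ∈ lamBox l, ∑ y ∈ (nbrs x).filter (· ∈ lamBox l),
          #{j | dualBond x y ∈ contourOf (Θs j)} : ℕ) : ℤ) := by
    push_cast
    simp only [Finset.mul_sum]
    refine Finset.sum_congr rfl fun x hx => Finset.sum_congr rfl fun y hy => ?_
    rw [Finset.mem_filter, mem_nbrs_iff] at hy
    exact foldr_flipC_mul_sub_of_isEContour hτ hε hcs hinj hy.1 hx hy.2
  rw [dH_eq_half_sum_bond_change ω τ (by simpa [List.mem_ofFn] using hnb), hbonds, hcount,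
    ← Finset.mul_sum]
  push_cast
  ring
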